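/- In the Delzant construction for a simple polytope Δ: for z ∈ ℂᴺ with φ_K(z) = j*(−η), the set {y_i : z_i = 0} is linearly independent, and consequently the stabilizer K_z = {[α] ∈ K : e^{2π√−1 αᵢ} = 1 for all i with z_i ≠ 0} is a finite group; hence j*(−η) is a regular value of the moment map φ_K. -/

import Mathlib

/-!
If `zᵢ = 0` then `‖zᵢ‖² = ηᵢ - β(mᵢ yᵢ)` puts `β` on the `i`-th facet, so simplicity of `Δ` makes
the normals `yᵢ` with `zᵢ = 0` independent; equivalently, `ϖ` is injective on the vectors of `ℝᴺ`
supported on `{i | zᵢ = 0}`. Everything else is a consequence of this injectivity.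

* Each class of the stabilizer has a representative `fract α ∈ [0,1]ᴺ` supported on
  `{i | zᵢ = 0}`; `ϖ` maps these injectively into the compact, discrete set `ℓ ∩ ϖ [0,1]ᴺ`.
* A functional on `ker ϖ` extends to `ℝᴺ` vanishing on the coordinates with `zᵢ = 0`, and such
  a functional is `x ↦ ∑ 2 Re(z̄ᵢ wᵢ) xᵢ` for `wᵢ` a real multiple of `zᵢ`.
-/

open Set

theorem LinearIndepOn.smul_of_ne_zero {K V ι : Type*} [Field K] [AddCommGroup V] [Module K V]
    {v : ι → V} {s : Set ι} (hv : LinearIndepOn K v s) {c : ι → K} (hc : ∀ i ∈ s, c i ≠ 0) :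
    LinearIndepOn K (fun i => c i • v i) s :=
  hv.units_smul fun i => Units.mk0 (c i) (hc i i.2)

theorem disjoint_pi_bot_ker_of_linearIndepOn {R M ι : Type*} [CommRing R] [AddCommGroup M]
    [Module R M] [Fintype ι] [DecidableEq ι] {ϖ : (ι → R) →ₗ[R] M} {s : Set ι}
    (hs : LinearIndepOn R (fun i => ϖ (Pi.single i 1)) s) :
    Disjoint (Submodule.pi sᶜ fun _ => ⊥) (LinearMap.ker ϖ) := by
  refine LinearMap.disjoint_ker.mpr fun x hx hϖx => ?_
  set l := Finsupp.equivFunOnFinite.symm x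
  have hsupp : l ∈ Finsupp.supported R R s := fun i hi => by
    by_contra his
    exact Finsupp.mem_support_iff.mp hi (by simpa [l] using hx i his)
  have hcomb : Finsupp.linearCombination R (fun i => ϖ (Pi.single i 1)) l = 0 := by
    rw [Finsupp.linearCombination_apply, Finsupp.sum_fintype _ _ (by simp), ← hϖx]
    simp only [l, Finsupp.coe_equivFunOnFinite_symm, ← map_smul, ← map_sum]
    congr 1
    ext j
    simp [Finset.sum_apply, Pi.single_apply]
  funext i
  simpa [l] using DFunLike.congr_fun (linearIndepOn_iff.mp hs l hsupp hcomb) i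

theorem LinearMap.exists_dual_eq_on_ker_of_disjoint {K V W : Type*} [Field K] [AddCommGroup V]
    [Module K V] [AddCommGroup W] [Module K W] (ϖ : V →ₗ[K] W) {U : Submodule K V}
    (hU : Disjoint U (LinearMap.ker ϖ)) (L : Module.Dual K (LinearMap.ker ϖ)) :
    ∃ c : Module.Dual K V, c ∘ₗ (LinearMap.ker ϖ).subtype = L ∧ ∀ u ∈ U, c u = 0 := by
  obtain ⟨L', hL'⟩ := LinearMap.exists_extend L
  have hinj : Function.Injective (ϖ ∘ₗ U.subtype) :=
    LinearMap.ker_eq_bot.mp <| LinearMap.ker_eq_bot'.mpr fun u hu =>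
      Subtype.ext (LinearMap.disjoint_ker.mp hU u u.2 hu)
  -- `g ∘ ϖ` agrees with `L'` on `U`, so `L' - g ∘ ϖ` kills `U` and still restricts to `L`.
  obtain ⟨g, hg⟩ := LinearMap.exists_extend
    ((L' ∘ₗ U.subtype) ∘ₗ (LinearEquiv.ofInjective _ hinj).symm.toLinearMap)
  refine ⟨L' - g ∘ₗ ϖ, ?_, fun u hu => ?_⟩
  · ext ξ
    simp [← hL']
  · have hgu := LinearMap.congr_fun hg (LinearEquiv.ofInjective _ hinj ⟨u, hu⟩)
    simp only [LinearMap.coe_comp, Submodule.coe_subtype, Function.comp_apply,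
      LinearEquiv.ofInjective_apply, LinearEquiv.coe_coe, LinearEquiv.symm_apply_apply] at hgu
    simp [hgu]

theorem Set.Finite.of_injOn_of_mapsTo_discrete {X Y : Type*} [TopologicalSpace X]
    [TopologicalSpace Y] {f : X → Y} (hf : Continuous f) {K T : Set X} (hK : IsCompact K)
    (hTK : T ⊆ K) (hinj : InjOn f T) {ℓ : Set Y} (hℓ : IsClosed ℓ) [DiscreteTopology ℓ]
    (hT : MapsTo f T ℓ) : T.Finite := by
  have hfin : (f '' K ∩ ℓ).Finite := ((hK.image hf).inter_right hℓ).finite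
    (isDiscrete_iff_discreteTopology.mpr (.of_subset inferInstance inter_subset_right))
  exact Finite.of_finite_image
    (hfin.subset (image_subset_iff.mpr fun x hx => ⟨⟨x, hTK hx, rfl⟩, hT hx⟩)) hinj

theorem QuotientAddGroup.mk_fract {ι : Type*} (α : ι → ℝ) :
    (QuotientAddGroup.mk (fun i => Int.fract (α i)) :
      (ι → ℝ) ⧸ AddSubgroup.pi univ fun _ => AddSubgroup.zmultiples (1 : ℝ)) =
      QuotientAddGroup.mk α := by
  rw [QuotientAddGroup.eq]
  exact fun i _ => ⟨⌊α i⌋, by simp [neg_add_eq_sub]⟩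

theorem finite_image_mk_of_disjoint_pi_bot_ker {ι 𝔱 : Type*} [AddCommGroup 𝔱] [Module ℝ 𝔱]
    [TopologicalSpace 𝔱] {ϖ : (ι → ℝ) →ₗ[ℝ] 𝔱} (hϖ : Continuous ϖ) {ℓ : AddSubgroup 𝔱}
    (hℓ : IsClosed (ℓ : Set 𝔱)) [DiscreteTopology ℓ] (hint : ∀ n : ι → ℤ, ϖ (fun i => n i) ∈ ℓ)
    {s : Set ι} (hs : Disjoint (Submodule.pi sᶜ fun _ => ⊥) (LinearMap.ker ϖ)) :
    ((QuotientAddGroup.mk : (ι → ℝ) → (ι → ℝ) ⧸ AddSubgroup.pi univ fun _ =>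
        AddSubgroup.zmultiples (1 : ℝ)) ''
      {α | ϖ α ∈ ℓ ∧ ∀ i ∉ s, ∃ k : ℤ, α i = k}).Finite := by
  set U : Submodule ℝ (ι → ℝ) := Submodule.pi sᶜ fun _ => ⊥
  have hinj : InjOn ϖ U := fun α hα α' hα' h => sub_eq_zero.mp <|
    LinearMap.disjoint_ker.mp hs _ (U.sub_mem hα hα') (by rw [map_sub, h, sub_self])
  have hT : (Icc 0 1 ∩ U ∩ ϖ ⁻¹' ℓ).Finite :=
    Finite.of_injOn_of_mapsTo_discrete hϖ isCompact_Icc (inter_subset_left.trans inter_subset_left)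
      (hinj.mono (inter_subset_left.trans inter_subset_right)) hℓ fun _ hα => hα.2
  refine (hT.image QuotientAddGroup.mk).subset ?_
  rintro _ ⟨α, ⟨hαℓ, hαint⟩, rfl⟩
  refine ⟨fun i => Int.fract (α i), ⟨⟨?_, ?_⟩, ?_⟩, QuotientAddGroup.mk_fract α⟩
  · exact ⟨fun i => Int.fract_nonneg _, fun i => (Int.fract_lt_one _).le⟩
  · intro i hi
    obtain ⟨k, hk⟩ := hαint i hi
    simp [hk]
  · have hfract : (fun i => Int.fract (α i)) = α - fun i => (⌊α i⌋ : ℝ) := rfl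
    simpa [hfract] using ℓ.sub_mem hαℓ (hint _)

open ComplexConjugate in
theorem exists_sum_two_re_conj_mul_eq {ι : Type*} [Fintype ι] [DecidableEq ι] (z : ι → ℂ)
    (c : Module.Dual ℝ (ι → ℝ)) (hc : ∀ i, z i = 0 → c (Pi.single i 1) = 0) :
    ∃ w : ι → ℂ, ∀ x, c x = ∑ i, 2 * (conj (z i) * w i).re * x i := by
  refine ⟨fun i => (c (Pi.single i 1) / (2 * Complex.normSq (z i)) : ℝ) * z i, fun x => ?_⟩
  rw [LinearMap.pi_apply_eq_sum_univ c x]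
  refine Finset.sum_congr rfl fun i _ => ?_
  have hsingle : (fun j => if i = j then (1 : ℝ) else 0) = Pi.single i 1 := by
    funext j
    simp [Pi.single_apply, eq_comm]
  rw [hsingle, smul_eq_mul, mul_comm, mul_left_comm, Complex.conj_mul', ← Complex.ofReal_pow,
    ← Complex.ofReal_mul, Complex.ofReal_re]
  rcases eq_or_ne (z i) 0 with hz | hz
  · simp [hc i hz]
  · have : ‖z i‖ ^ 2 ≠ 0 := by positivity
    rw [Complex.normSq_eq_norm_sq]
    field_simp

theorem delzant_level_regular_general
    {𝔱 : Type*} [AddCommGroup 𝔱] [Module ℝ 𝔱] [TopologicalSpace 𝔱]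
    [IsTopologicalAddGroup 𝔱] [ContinuousSMul ℝ 𝔱]
    (ℓ : AddSubgroup 𝔱) (hℓclosed : IsClosed (ℓ : Set 𝔱)) [DiscreteTopology ℓ]
    {N : ℕ} (y : Fin N → 𝔱) (m : Fin N → ℕ) (hm : ∀ i, 0 < m i)
    (hy : ∀ i, (m i : ℝ) • y i ∈ ℓ) (η : Fin N → ℝ)
    (Δ : Set (Module.Dual ℝ 𝔱))
    -- simplicity: at every point of Δ the active normals are independent
    (hsimple : ∀ β ∈ Δ, LinearIndependent ℝ
      (fun j : {i : Fin N // β ((m i : ℝ) • y i) = η i} => y j.1))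
    (ϖ : (Fin N → ℝ) →ₗ[ℝ] 𝔱)
    (hϖ : ∀ x : Fin N → ℝ, ϖ x = ∑ i, x i • ((m i : ℝ) • y i))
    (ZN : AddSubgroup (Fin N → ℝ))
    (hZN : ZN = AddSubgroup.pi Set.univ (fun _ => AddSubgroup.zmultiples (1 : ℝ)))
    (z : Fin N → ℂ)
    (hz : ∃ β ∈ Δ, ∀ i, ‖z i‖ ^ 2 = η i - β ((m i : ℝ) • y i)) :
    LinearIndependent ℝ (fun j : {i : Fin N // z i = 0} => y j.1) ∧
    Set.Finite ((fun α : Fin N → ℝ => (QuotientAddGroup.mk α : (Fin N → ℝ) ⧸ ZN)) ''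
      { α : Fin N → ℝ | ϖ α ∈ ℓ ∧ ∀ i, z i ≠ 0 → ∃ k : ℤ, α i = (k : ℝ) }) ∧
    ∀ L : Module.Dual ℝ ↥(LinearMap.ker ϖ), ∃ w : Fin N → ℂ,
      ∀ ξ : ↥(LinearMap.ker ϖ),
        L ξ = ∑ i, 2 * ((starRingEnd ℂ) (z i) * w i).re * (ξ : Fin N → ℝ) i := by
  subst hZN
  obtain ⟨β, hβΔ, hβz⟩ := hz
  have hactive : LinearIndepOn ℝ y {i | β ((m i : ℝ) • y i) = η i} := hsimple β hβΔ
  have hindep : LinearIndepOn ℝ y {i | z i = 0} :=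
    hactive.mono fun i (hi : z i = 0) => show β ((m i : ℝ) • y i) = η i by
      have := hβz i
      rw [hi, norm_zero, zero_pow two_ne_zero] at this
      linarith
  have hbasis : ∀ i, ϖ (Pi.single i 1) = (m i : ℝ) • y i := fun i => by simp [hϖ, Pi.single_apply]
  have hdisj : Disjoint (Submodule.pi {i | z i = 0}ᶜ fun _ => ⊥) (LinearMap.ker ϖ) := by
    refine disjoint_pi_bot_ker_of_linearIndepOn ?_
    simpa only [hbasis] using hindep.smul_of_ne_zero fun i _ => Nat.cast_ne_zero.mpr (hm i).ne'
  have hint : ∀ n : Fin N → ℤ, ϖ (fun i => n i) ∈ ℓ := fun n => by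
    rw [hϖ]
    exact ℓ.sum_mem fun i _ => by
      simpa only [Int.cast_smul_eq_zsmul] using ℓ.zsmul_mem (hy i) (n i)
  refine ⟨hindep, finite_image_mk_of_disjoint_pi_bot_ker ϖ.continuous_on_pi hℓclosed hint hdisj,
    fun L => ?_⟩
  obtain ⟨c, hcL, hc⟩ := ϖ.exists_dual_eq_on_ker_of_disjoint hdisj L
  obtain ⟨w, hw⟩ := exists_sum_two_re_conj_mul_eq z c fun i hi =>
    hc _ fun j hj => by simp [show j ≠ i from fun h => hj (h ▸ hi)]
  exact ⟨w, fun ξ => by rw [← hcL]; exact hw ξ⟩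

/-- In the Delzant construction for a simple polytope Δ: for
z ∈ ℂᴺ in the level set φ_K(z) = j*(−η), the normals yᵢ with zᵢ = 0 are
linearly independent; consequently the stabilizer
K_z = {[α] ∈ K : e^{2π√−1 αᵢ} = 1 for all i with zᵢ ≠ 0} is finite, and the
level is regular (the differential of the K-moment map at z is surjective onto
𝔨*). -/
theorem delzant_level_regular
    {𝔱 : Type*} [AddCommGroup 𝔱] [Module ℝ 𝔱] [TopologicalSpace 𝔱]
    [IsTopologicalAddGroup 𝔱] [ContinuousSMul ℝ 𝔱]
    (ℓ : AddSubgroup 𝔱) (hℓclosed : IsClosed (ℓ : Set 𝔱)) [DiscreteTopology ℓ]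
    {N : ℕ} (y : Fin N → 𝔱) (m : Fin N → ℕ) (hm : ∀ i, 0 < m i)
    (hy : ∀ i, (m i : ℝ) • y i ∈ ℓ) (η : Fin N → ℝ)
    (Δ : Set (Module.Dual ℝ 𝔱))
    (hΔ : Δ = { β : Module.Dual ℝ 𝔱 | ∀ i, β ((m i : ℝ) • y i) ≤ η i })
    -- simplicity: at every point of Δ the active normals are independent
    (hsimple : ∀ β ∈ Δ, LinearIndependent ℝ
      (fun j : {i : Fin N // β ((m i : ℝ) • y i) = η i} => y j.1))
    (ϖ : (Fin N → ℝ) →ₗ[ℝ] 𝔱)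
    (hϖ : ∀ x : Fin N → ℝ, ϖ x = ∑ i, x i • ((m i : ℝ) • y i))
    (ZN : AddSubgroup (Fin N → ℝ))
    (hZN : ZN = AddSubgroup.pi Set.univ (fun _ => AddSubgroup.zmultiples (1 : ℝ)))
    (z : Fin N → ℂ)
    (hz : ∃ β ∈ Δ, ∀ i, ‖z i‖ ^ 2 = η i - β ((m i : ℝ) • y i)) :
    LinearIndependent ℝ (fun j : {i : Fin N // z i = 0} => y j.1) ∧
    Set.Finite ((fun α : Fin N → ℝ => (QuotientAddGroup.mk α : (Fin N → ℝ) ⧸ ZN)) ''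
      { α : Fin N → ℝ | ϖ α ∈ ℓ ∧ ∀ i, z i ≠ 0 → ∃ k : ℤ, α i = (k : ℝ) }) ∧
    ∀ L : Module.Dual ℝ ↥(LinearMap.ker ϖ), ∃ w : Fin N → ℂ,
      ∀ ξ : ↥(LinearMap.ker ϖ),
        L ξ = ∑ i, 2 * ((starRingEnd ℂ) (z i) * w i).re * (ξ : Fin N → ℝ) i :=
  delzant_level_regular_general ℓ hℓclosed y m hm hy η Δ hsimple ϖ hϖ ZN hZN z hz
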